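/- arXiv:2509.16027 — 5 statements merged into one kernel-verified Lean document; each statement's English description precedes it below -/
import Mathlib

section
/- Let μ and ν be Borel probability measures on ℝ^d, both absolutely continuous with respect to the Lebesgue measure. Let φ, ψ : ℝ^d → ℝ be convex functions such that φ is differentiable μ-almost everywhere, ψ is differentiable ν-almost everywhere, the pushforward of μ by ∇φ equals ν, and the pushforward of ν by ∇ψ equals μ. Then ∇ψ(∇φ(x)) = x for μ-almost every x and ∇φ(∇ψ(y)) = y for ν-almost every y. -/
/-!
Let `T = ∇ψ ∘ ∇φ`, a map preserving `μ`, and let `ψ^*` be the convex conjugate of `ψ`. The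
subgradient inequality for `φ` at `x`, together with the equality case
`ψ^*(∇ψ y) = ⟪∇ψ y, y⟫ - ψ y` of Fenchel–Young, gives
`(φ - ψ^*)(T x) - (φ - ψ^*)(x) ≥ ψ^*(x) - (⟪x, ∇φ x⟫ - ψ (∇φ x)) ≥ 0`, where `ψ^*` is finite
`μ`-a.e. because `μ` is the image of `ν` under `∇ψ`.
A function that can only increase along a measure-preserving map of a finite measure is a.e.
invariant, so the Fenchel–Young gap vanishes a.e.: `∇φ x` maximises `⟪x, ·⟫ - ψ`, whence
`∇ψ (∇φ x) = x`. Exchanging the roles of `(μ, φ)` and `(ν, ψ)` gives the second claim.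
-/

open MeasureTheory Set
open scoped RealInnerProductSpace

section MeasurePreserving

variable {α : Type*} [MeasurableSpace α] {μ : Measure α} [IsFiniteMeasure μ] {T : α → α}

/-- Composing with `arctan` makes `f` bounded, hence integrable, and `T` preserves its
integral. -/
theorem MeasureTheory.MeasurePreserving.ae_comp_eq_of_ae_le (hT : MeasurePreserving T μ μ)
    {f : α → ℝ} (hf : Measurable f) (hle : ∀ᵐ x ∂μ, f x ≤ f (T x)) :
    ∀ᵐ x ∂μ, f (T x) = f x := by
  have hg : Measurable (Real.arctan ∘ f) := Real.continuous_arctan.measurable.comp hf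
  have hbound : ∀ x, ‖Real.arctan x‖ ≤ Real.pi / 2 := fun x =>
    abs_le.2 ⟨(Real.neg_pi_div_two_lt_arctan x).le, (Real.arctan_lt_pi_div_two x).le⟩
  have hint : Integrable (Real.arctan ∘ f) μ :=
    .of_bound hg.aestronglyMeasurable _ (.of_forall fun _ => hbound _)
  have hintT : Integrable (Real.arctan ∘ f ∘ T) μ :=
    .of_bound (hg.comp hT.measurable).aestronglyMeasurable _ (.of_forall fun _ => hbound _)
  have hmono : Real.arctan ∘ f ≤ᵐ[μ] Real.arctan ∘ f ∘ T := by
    filter_upwards [hle] with x hx using Real.arctan_mono hx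
  have hintegral : ∫ x, Real.arctan (f x) ∂μ = ∫ x, Real.arctan (f (T x)) ∂μ := by
    conv_lhs => rw [← hT.map_eq]
    exact integral_map hT.aemeasurable hg.aestronglyMeasurable
  filter_upwards [(integral_eq_iff_of_ae_le hint hintT hmono).1 hintegral] with x hx
  exact (Real.arctan_injective hx).symm

end MeasurePreserving

section ConvexConjugate

variable {E : Type*} [NormedAddCommGroup E] [InnerProductSpace ℝ E]

noncomputable def convexConjugate (f : E → ℝ) (x : E) : EReal :=
  ⨆ y, ((⟪x, y⟫ - f y : ℝ) : EReal)

theorem le_convexConjugate (f : E → ℝ) (x y : E) :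
    ((⟪x, y⟫ - f y : ℝ) : EReal) ≤ convexConjugate f x :=
  le_iSup (fun y => ((⟪x, y⟫ - f y : ℝ) : EReal)) y

theorem convexConjugate_ne_bot (f : E → ℝ) (x : E) : convexConjugate f x ≠ ⊥ :=
  ne_bot_of_le_ne_bot (EReal.coe_ne_bot _) (le_convexConjugate f x 0)

theorem le_toReal_convexConjugate {f : E → ℝ} {x : E} (hx : convexConjugate f x ≠ ⊤) (y : E) :
    ⟪x, y⟫ - f y ≤ (convexConjugate f x).toReal := by
  rw [← EReal.coe_le_coe_iff, EReal.coe_toReal hx (convexConjugate_ne_bot f x)]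
  exact le_convexConjugate f x y

theorem lowerSemicontinuous_convexConjugate (f : E → ℝ) :
    LowerSemicontinuous (convexConjugate f) :=
  lowerSemicontinuous_iSup fun _ => (continuous_coe_real_ereal.comp
    ((continuous_id.inner continuous_const).sub continuous_const)).lowerSemicontinuous

theorem measurable_convexConjugate [MeasurableSpace E] [OpensMeasurableSpace E] (f : E → ℝ) :
    Measurable (convexConjugate f) :=
  (lowerSemicontinuous_convexConjugate f).measurable

variable [CompleteSpace E]

theorem ConvexOn.add_inner_gradient_le {s : Set E} {f : E → ℝ} (hf : ConvexOn ℝ s f) {x y : E}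
    (hx : x ∈ s) (hy : y ∈ s) (hfx : DifferentiableAt ℝ f x) :
    f x + ⟪gradient f x, y - x⟫ ≤ f y := by
  let g : ℝ →ᵃ[ℝ] E := AffineMap.lineMap x y
  have hline : ConvexOn ℝ (g ⁻¹' s) (f ∘ g) := hf.comp_affineMap g
  have hderiv : HasDerivAt (f ∘ g) ⟪gradient f x, y - x⟫ 0 := by
    have hfg : HasFDerivAt f (InnerProductSpace.toDual ℝ E (gradient f x)) (g 0) := by
      simpa [g] using hfx.hasGradientAt.hasFDerivAt
    exact hfg.comp_hasDerivAt 0 AffineMap.hasDerivAt_lineMap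
  have := hline.le_slope_of_hasDerivAt (x := 0) (y := 1) (by simpa [g] using hx)
    (by simpa [g] using hy) zero_lt_one hderiv
  simp only [slope_def_field, Function.comp_apply, g, AffineMap.lineMap_apply_zero,
    AffineMap.lineMap_apply_one, sub_zero, div_one] at this
  linarith

theorem gradient_eq_of_isMinOn_sub_inner {f : E → ℝ} {p v : E} (hfp : DifferentiableAt ℝ f p)
    (hmin : IsMinOn (fun y => f y - ⟪v, y⟫) univ p) : gradient f p = v := by
  have hderiv : HasFDerivAt (fun y => f y - ⟪v, y⟫)
      (fderiv ℝ f p - InnerProductSpace.toDual ℝ E v) p :=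
    hfp.hasFDerivAt.sub (InnerProductSpace.toDual ℝ E v).hasFDerivAt
  have := (hmin.isLocalMin Filter.univ_mem).hasFDerivAt_eq_zero hderiv
  rw [gradient, sub_eq_zero.1 this, LinearIsometryEquiv.symm_apply_apply]

theorem measurable_gradient [MeasurableSpace E] [BorelSpace E] (f : E → ℝ) :
    Measurable (gradient f) :=
  (InnerProductSpace.toDual ℝ E).symm.continuous.measurable.comp (measurable_fderiv ℝ f)

theorem ConvexOn.convexConjugate_gradient {f : E → ℝ} (hf : ConvexOn ℝ univ f) {x : E}
    (hx : DifferentiableAt ℝ f x) :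
    convexConjugate f (gradient f x) = ((⟪gradient f x, x⟫ - f x : ℝ) : EReal) := by
  refine le_antisymm (iSup_le fun y => EReal.coe_le_coe_iff.2 ?_) (le_convexConjugate f _ x)
  have := hf.add_inner_gradient_le (mem_univ x) (mem_univ y) hx
  rw [inner_sub_right] at this
  linarith

theorem gradient_eq_of_convexConjugate_le {f : E → ℝ} {p x : E} (hp : DifferentiableAt ℝ f p)
    (h : convexConjugate f x ≤ ((⟪x, p⟫ - f p : ℝ) : EReal)) : gradient f p = x := by
  refine gradient_eq_of_isMinOn_sub_inner hp fun y _ => ?_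
  have := EReal.coe_le_coe_iff.1 ((le_convexConjugate f x y).trans h)
  show f p - ⟪x, p⟫ ≤ f y - ⟪x, y⟫
  linarith

theorem ConvexOn.fenchelYoung_gap_le {φ ψ : E → ℝ} (hφ : ConvexOn ℝ univ φ)
    (hψ : ConvexOn ℝ univ ψ) {x : E} (hx : DifferentiableAt ℝ φ x)
    (hψx : DifferentiableAt ℝ ψ (gradient φ x)) :
    (convexConjugate ψ x).toReal - (⟪x, gradient φ x⟫ - ψ (gradient φ x)) ≤
      (φ (gradient ψ (gradient φ x)) - (convexConjugate ψ (gradient ψ (gradient φ x))).toReal) -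
        (φ x - (convexConjugate ψ x).toReal) := by
  rw [hψ.convexConjugate_gradient hψx, EReal.toReal_coe]
  have := hφ.add_inner_gradient_le (mem_univ x) (mem_univ (gradient ψ (gradient φ x))) hx
  rw [inner_sub_right, real_inner_comm x, real_inner_comm (gradient ψ _)] at this
  linarith

end ConvexConjugate

theorem ae_gradient_comp_gradient_eq_self {E : Type*} [NormedAddCommGroup E]
    [InnerProductSpace ℝ E] [FiniteDimensional ℝ E] [MeasurableSpace E] [BorelSpace E]
    {μ ν : Measure E} [IsFiniteMeasure μ] {φ ψ : E → ℝ}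
    (hφ : ConvexOn ℝ univ φ) (hψ : ConvexOn ℝ univ ψ)
    (hφd : ∀ᵐ x ∂μ, DifferentiableAt ℝ φ x) (hψd : ∀ᵐ y ∂ν, DifferentiableAt ℝ ψ y)
    (hpush : μ.map (gradient φ) = ν) (hpush' : ν.map (gradient ψ) = μ) :
    ∀ᵐ x ∂μ, gradient ψ (gradient φ x) = x := by
  have hφm := measurable_gradient φ
  have hψm := measurable_gradient ψ
  have hT : MeasurePreserving (fun x => gradient ψ (gradient φ x)) μ μ :=
    (MeasurePreserving.mk hψm hpush').comp ⟨hφm, hpush⟩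
  have hψd' : ∀ᵐ x ∂μ, DifferentiableAt ℝ ψ (gradient φ x) := by
    rw [← hpush] at hψd
    exact (ae_map_iff hφm.aemeasurable (measurableSet_of_differentiableAt ℝ ψ)).1 hψd
  have hfin : ∀ᵐ x ∂μ, convexConjugate ψ x ≠ ⊤ := by
    rw [← hpush']
    refine (ae_map_iff (p := fun x => convexConjugate ψ x ≠ ⊤) hψm.aemeasurable
      (measurable_convexConjugate ψ (measurableSet_singleton ⊤)).compl).2 ?_
    filter_upwards [hψd] with y hy
    exact hψ.convexConjugate_gradient hy ▸ EReal.coe_ne_top _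
  set F : E → ℝ := fun x => φ x - (convexConjugate ψ x).toReal
  have hF : Measurable F := (continuousOn_univ.1 (hφ.continuousOn isOpen_univ)).measurable.sub
    (measurable_convexConjugate ψ).ereal_toReal
  have hgap : ∀ᵐ x ∂μ, (convexConjugate ψ x).toReal - (⟪x, gradient φ x⟫ - ψ (gradient φ x)) ≤
      F (gradient ψ (gradient φ x)) - F x := by
    filter_upwards [hφd, hψd'] with x hx hψx using hφ.fenchelYoung_gap_le hψ hx hψx
  have hinvariant := hT.ae_comp_eq_of_ae_le hF (by
    filter_upwards [hgap, hfin] with x hgap hx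
    linarith [le_toReal_convexConjugate hx (gradient φ x)])
  filter_upwards [hψd', hfin, hgap, hinvariant] with x hψx hx hgap hinvariant
  refine gradient_eq_of_convexConjugate_le hψx ?_
  rw [← EReal.coe_toReal hx (convexConjugate_ne_bot ψ x), EReal.coe_le_coe_iff]
  linarith

theorem gradient_inverse_of_transport_general {d : ℕ}
    (μ ν : Measure (EuclideanSpace ℝ (Fin d)))
    [IsProbabilityMeasure μ] [IsProbabilityMeasure ν]
    (φ ψ : EuclideanSpace ℝ (Fin d) → ℝ)
    (hφ : ConvexOn ℝ Set.univ φ) (hψ : ConvexOn ℝ Set.univ ψ)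
    (hφd : ∀ᵐ x ∂μ, DifferentiableAt ℝ φ x)
    (hψd : ∀ᵐ y ∂ν, DifferentiableAt ℝ ψ y)
    (hpush : μ.map (gradient φ) = ν) (hpush' : ν.map (gradient ψ) = μ) :
    (∀ᵐ x ∂μ, gradient ψ (gradient φ x) = x) ∧
    (∀ᵐ y ∂ν, gradient φ (gradient ψ y) = y) :=
  ⟨ae_gradient_comp_gradient_eq_self hφ hψ hφd hψd hpush hpush',
    ae_gradient_comp_gradient_eq_self hψ hφ hψd hφd hpush' hpush⟩

/-- Inversion of cyclically monotone (Brenier/McCann) transport maps: if `∇φ` pushes `μ` to `ν`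
and `∇ψ` pushes `ν` to `μ`, with `φ, ψ` convex, `μ, ν` absolutely continuous probability
measures, then `∇ψ ∘ ∇φ = id` `μ`-a.e. and `∇φ ∘ ∇ψ = id` `ν`-a.e. -/
theorem gradient_inverse_of_transport {d : ℕ}
    (μ ν : Measure (EuclideanSpace ℝ (Fin d)))
    [IsProbabilityMeasure μ] [IsProbabilityMeasure ν]
    (hμ : μ ≪ volume) (hν : ν ≪ volume)
    (φ ψ : EuclideanSpace ℝ (Fin d) → ℝ)
    (hφ : ConvexOn ℝ Set.univ φ) (hψ : ConvexOn ℝ Set.univ ψ)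
    (hφd : ∀ᵐ x ∂μ, DifferentiableAt ℝ φ x)
    (hψd : ∀ᵐ y ∂ν, DifferentiableAt ℝ ψ y)
    (hpush : μ.map (gradient φ) = ν) (hpush' : ν.map (gradient ψ) = μ) :
    (∀ᵐ x ∂μ, gradient ψ (gradient φ x) = x) ∧
    (∀ᵐ y ∂ν, gradient φ (gradient ψ y) = y) :=
  gradient_inverse_of_transport_general μ ν φ ψ hφ hψ hφd hψd hpush hpush'
end

section
/- Let μ, ν, p₀ be Borel probability measures on ℝ^d, all absolutely continuous with respect to the Lebesgue measure. Let Q_μ : ℝ^d → ℝ^d and Q_ν : ℝ^d → ℝ^d be Borel cyclically monotone maps with Q_μ♯μ = p₀ and Q_ν♯ν = p₀. If T₁, T₂ : ℝ^d → ℝ^d are Borel transport maps from μ to ν satisfying Q_ν(T₁(x)) = Q_μ(x) for μ-almost every x and Q_ν(T₂(x)) = Q_μ(x) for μ-almost every x, then T₁ = T₂ μ-almost everywhere. -/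
open MeasureTheory

/-- A map `T : ℝ^d → ℝ^d` is cyclically monotone if for every `m ≥ 1` and points
`x⁽¹⁾, …, x⁽ᵐ⁾` (indices taken cyclically), `∑ ⟨x⁽ⁱ⁾, T(x⁽ⁱ⁾) − T(x⁽ⁱ⁺¹⁾)⟩ ≥ 0`,
the inner product being the Euclidean one. -/
def CyclicallyMonotone {d : ℕ} (T : (Fin d → ℝ) → (Fin d → ℝ)) : Prop :=
  ∀ (m : ℕ) (x : Fin (m + 1) → (Fin d → ℝ)),
    0 ≤ ∑ i : Fin (m + 1), ∑ k : Fin d, x i k * (T (x i) k - T (x (i + 1)) k)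

/-!
Rockafellar's construction turns the cyclically monotone map `Qν` into a convex potential `ψ`,
finite on a convex set containing the range of `Qν`, such that every `y` is a subgradient of `ψ`
at `Qν y`. A convex function on `ℝ^d` is differentiable at Lebesgue-almost every point of its
domain (the frontier of a convex set is null, and inside it Rademacher's theorem applies), and at a
point of differentiability the subgradient is unique. Hence almost every fibre of `Qν` has at most
one point. Since `p₀ ≪ volume`, `Qν ♯ ν = p₀` and `T₁ ♯ μ = ν`, for `μ`-a.e. `x` the fibre of `Qν`
through `T₁ x` is such a fibre, and it contains `T₂ x` because `Qν (T₂ x) = Qμ x = Qν (T₁ x)`.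
-/

open Filter Topology

section Rademacher

variable {E F : Type*} [NormedAddCommGroup E] [NormedSpace ℝ E] [FiniteDimensional ℝ E]
  [MeasurableSpace E] [BorelSpace E] [NormedAddCommGroup F] [NormedSpace ℝ F]
  [FiniteDimensional ℝ F] {μ : Measure E} [μ.IsAddHaarMeasure]

theorem LocallyLipschitzOn.ae_differentiableAt_of_mem {f : E → F} {U : Set E} (hU : IsOpen U)
    (hf : LocallyLipschitzOn U f) : ∀ᵐ x ∂μ, x ∈ U → DifferentiableAt ℝ f x := by
  rw [ae_iff]
  refine measure_null_of_locally_null _ fun x hx => ?_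
  obtain ⟨K, t, ht, hlip⟩ := hf (of_not_imp hx)
  rw [nhdsWithin_eq_nhds.2 (hU.mem_nhds (of_not_imp hx))] at ht
  refine ⟨_, inter_mem_nhdsWithin _ (interior_mem_nhds.2 ht), ?_⟩
  rw [measure_eq_zero_iff_ae_notMem]
  filter_upwards [hlip.ae_differentiableWithinAt_of_mem (μ := μ)] with y hy ⟨hyU, hyt⟩
  exact hyU fun _ =>
    (hy (interior_subset hyt)).differentiableAt (mem_interior_iff_mem_nhds.1 hyt)

theorem ConvexOn.ae_differentiableAt_of_mem_interior {f : E → ℝ} {s : Set E}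
    (hf : ConvexOn ℝ s f) : ∀ᵐ x ∂μ, x ∈ interior s → DifferentiableAt ℝ f x :=
  hf.locallyLipschitzOn_interior.ae_differentiableAt_of_mem isOpen_interior

end Rademacher

theorem HasFDerivAt.eq_of_eventually_add_le {E : Type*} [NormedAddCommGroup E]
    [NormedSpace ℝ E] {ψ : E → ℝ} {f ℓ : E →L[ℝ] ℝ} {z : E} (hf : HasFDerivAt ψ f z)
    (hℓ : ∀ᶠ w in 𝓝 z, ψ z + ℓ (w - z) ≤ ψ w) : ℓ = f := by
  have hmin : IsLocalMin (fun w => ψ w - ℓ w) z :=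
    hℓ.mono fun w hw => by rw [map_sub] at hw; linarith
  exact (sub_eq_zero.1 (hmin.hasFDerivAt_eq_zero (hf.sub ℓ.hasFDerivAt))).symm

section Rockafellar

open Matrix

variable {d : ℕ} {Q : (Fin d → ℝ) → (Fin d → ℝ)}

def chainSum (Q : (Fin d → ℝ) → (Fin d → ℝ)) {m : ℕ} (x : Fin (m + 1) → Fin d → ℝ) : ℝ :=
  ∑ i : Fin m, x i.castSucc ⬝ᵥ (Q (x i.succ) - Q (x i.castSucc))

def chainValue (Q : (Fin d → ℝ) → (Fin d → ℝ)) {m : ℕ} (x : Fin (m + 1) → Fin d → ℝ)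
    (z : Fin d → ℝ) : ℝ :=
  chainSum Q x + x (Fin.last m) ⬝ᵥ (z - Q (x (Fin.last m)))

def chainValues (Q : (Fin d → ℝ) → (Fin d → ℝ)) (z : Fin d → ℝ) : Set ℝ :=
  {v | ∃ (m : ℕ) (x : Fin (m + 1) → Fin d → ℝ), x 0 = 0 ∧ v = chainValue Q x z}

def rockafellarDomain (Q : (Fin d → ℝ) → (Fin d → ℝ)) : Set (Fin d → ℝ) :=
  {z | BddAbove (chainValues Q z)}

/-- Rockafellar's potential for the inverse relation `Q y ↦ y`: the supremum of
`∑ᵢ ⟨xᵢ, Q xᵢ₊₁ - Q xᵢ⟩ + ⟨xₘ, z - Q xₘ⟩` over finite chains `0 = x₀, …, xₘ`. Off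
`rockafellarDomain Q` the set is unbounded and `sSup` returns a junk value. -/
noncomputable def rockafellarPotential (Q : (Fin d → ℝ) → (Fin d → ℝ)) (z : Fin d → ℝ) : ℝ :=
  sSup (chainValues Q z)

theorem chainSum_snoc {m : ℕ} (x : Fin (m + 1) → Fin d → ℝ) (y : Fin d → ℝ) :
    chainSum Q (Fin.snoc x y : Fin (m + 2) → Fin d → ℝ) = chainValue Q x (Q y) := by
  rw [chainSum, Fin.sum_univ_castSucc, Fin.succ_last, Fin.snoc_castSucc, Fin.snoc_last]
  simp_rw [Fin.succ_castSucc, Fin.snoc_castSucc]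
  rfl

theorem chainValues_nonempty (Q : (Fin d → ℝ) → (Fin d → ℝ)) (z : Fin d → ℝ) :
    (chainValues Q z).Nonempty :=
  ⟨_, 0, fun _ => 0, rfl, rfl⟩

theorem CyclicallyMonotone.chainSum_le (hQ : CyclicallyMonotone Q) {m : ℕ}
    (x : Fin (m + 1) → Fin d → ℝ) :
    chainSum Q x ≤ x (Fin.last m) ⬝ᵥ (Q (x (Fin.last m)) - Q (x 0)) := by
  have h : 0 ≤ ∑ i, x i ⬝ᵥ (Q (x i) - Q (x (i + 1))) := hQ m x
  rw [Fin.sum_univ_castSucc, Fin.last_add_one] at h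
  have hsum : ∑ i : Fin m, x i.castSucc ⬝ᵥ (Q (x i.castSucc) - Q (x (i.castSucc + 1)))
      = -chainSum Q x := by
    simp only [chainSum, Fin.coeSucc_eq_succ, ← Finset.sum_neg_distrib, ← dotProduct_neg,
      neg_sub]
  linarith

theorem CyclicallyMonotone.mem_rockafellarDomain (hQ : CyclicallyMonotone Q) (y : Fin d → ℝ) :
    Q y ∈ rockafellarDomain Q := by
  refine ⟨y ⬝ᵥ (Q y - Q 0), ?_⟩
  rintro v ⟨m, x, hx0, rfl⟩
  have h := hQ.chainSum_le (Fin.snoc x y : Fin (m + 2) → Fin d → ℝ)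
  rwa [chainSum_snoc, Fin.snoc_last, ← Fin.castSucc_zero, Fin.snoc_castSucc, hx0] at h

theorem chainValue_convexCombo {m : ℕ} (x : Fin (m + 1) → Fin d → ℝ) {a b : ℝ} (hab : a + b = 1)
    (z w : Fin d → ℝ) :
    chainValue Q x (a • z + b • w) = a * chainValue Q x z + b * chainValue Q x w := by
  simp only [chainValue, dotProduct_sub, dotProduct_add, dotProduct_smul, smul_eq_mul]
  linear_combination (chainSum Q x - x (Fin.last m) ⬝ᵥ Q (x (Fin.last m))) * hab.symm

theorem convexCombo_mem_upperBounds_chainValues {z w : Fin d → ℝ} {M N a b : ℝ}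
    (hM : M ∈ upperBounds (chainValues Q z)) (hN : N ∈ upperBounds (chainValues Q w))
    (ha : 0 ≤ a) (hb : 0 ≤ b) (hab : a + b = 1) :
    a * M + b * N ∈ upperBounds (chainValues Q (a • z + b • w)) := by
  rintro v ⟨m, x, hx0, rfl⟩
  rw [chainValue_convexCombo x hab]
  gcongr
  exacts [hM ⟨m, x, hx0, rfl⟩, hN ⟨m, x, hx0, rfl⟩]

theorem convexOn_rockafellarPotential (Q : (Fin d → ℝ) → (Fin d → ℝ)) :
    ConvexOn ℝ (rockafellarDomain Q) (rockafellarPotential Q) := by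
  refine ⟨fun z ⟨M, hM⟩ w ⟨N, hN⟩ a b ha hb hab =>
    ⟨_, convexCombo_mem_upperBounds_chainValues hM hN ha hb hab⟩, ?_⟩
  intro z hz w hw a b ha hb hab
  exact csSup_le (chainValues_nonempty Q _) <| convexCombo_mem_upperBounds_chainValues
    (isLUB_csSup (chainValues_nonempty Q z) hz).1 (isLUB_csSup (chainValues_nonempty Q w) hw).1
    ha hb hab

theorem rockafellarPotential_add_le (y : Fin d → ℝ) {w : Fin d → ℝ}
    (hw : w ∈ rockafellarDomain Q) :
    rockafellarPotential Q (Q y) + y ⬝ᵥ (w - Q y) ≤ rockafellarPotential Q w := by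
  rw [← le_sub_iff_add_le]
  refine csSup_le (chainValues_nonempty Q _) ?_
  rintro v ⟨m, x, hx0, rfl⟩
  rw [le_sub_iff_add_le]
  refine le_csSup hw ⟨m + 1, Fin.snoc x y, ?_, ?_⟩
  · rw [← Fin.castSucc_zero, Fin.snoc_castSucc, hx0]
  · rw [← chainSum_snoc]
    simp only [chainValue, Fin.snoc_last]

end Rockafellar

open Matrix in
theorem eq_of_eventually_add_dotProduct_le {d : ℕ} {ψ : (Fin d → ℝ) → ℝ} {z y₁ y₂ : Fin d → ℝ}
    (hψ : DifferentiableAt ℝ ψ z) (h₁ : ∀ᶠ w in 𝓝 z, ψ z + y₁ ⬝ᵥ (w - z) ≤ ψ w)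
    (h₂ : ∀ᶠ w in 𝓝 z, ψ z + y₂ ⬝ᵥ (w - z) ≤ ψ w) : y₁ = y₂ := by
  let ℓ (y : Fin d → ℝ) := LinearMap.toContinuousLinearMap (dotProductBilin ℝ ℝ y)
  have h : ℓ y₁ = ℓ y₂ := (hψ.hasFDerivAt.eq_of_eventually_add_le h₁).trans
    (hψ.hasFDerivAt.eq_of_eventually_add_le h₂).symm
  exact dotProduct_eq _ _ fun v => DFunLike.congr_fun h v

theorem CyclicallyMonotone.ae_subsingleton_preimage {d : ℕ} {Q : (Fin d → ℝ) → (Fin d → ℝ)}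
    (hQ : CyclicallyMonotone Q) (μ : Measure (Fin d → ℝ)) [μ.IsAddHaarMeasure] :
    ∀ᵐ z ∂μ, (Q ⁻¹' {z}).Subsingleton := by
  have hψ := convexOn_rockafellarPotential Q
  have hfrontier : ∀ᵐ z ∂μ, z ∉ frontier (rockafellarDomain Q) :=
    measure_eq_zero_iff_ae_notMem.1 (hψ.1.addHaar_frontier μ)
  filter_upwards [hψ.ae_differentiableAt_of_mem_interior, hfrontier]
    with z hdiff hz y₁ (rfl : Q y₁ = z) y₂ (hy₂ : Q y₂ = Q y₁)
  have hint : Q y₁ ∈ interior (rockafellarDomain Q) := by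
    by_contra h
    exact hz ⟨subset_closure (hQ.mem_rockafellarDomain y₁), h⟩
  have hsub (y : Fin d → ℝ) (hy : Q y = Q y₁) : ∀ᶠ w in 𝓝 (Q y₁),
      rockafellarPotential Q (Q y₁) + y ⬝ᵥ (w - Q y₁) ≤ rockafellarPotential Q w := by
    filter_upwards [mem_interior_iff_mem_nhds.1 hint] with w hw
    simpa only [hy] using rockafellarPotential_add_le y hw
  exact eq_of_eventually_add_dotProduct_le (hdiff hint) (hsub y₁ rfl) (hsub y₂ hy₂)

theorem quantilePreserving_unique_general {d : ℕ}
    (μ ν p₀ : Measure (Fin d → ℝ))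
    (hp₀ : p₀ ≪ volume)
    (Qμ Qν : (Fin d → ℝ) → (Fin d → ℝ))
    (hQνm : Measurable Qν)
    (hQνcm : CyclicallyMonotone Qν)
    (hQν : ν.map Qν = p₀)
    (T₁ T₂ : (Fin d → ℝ) → (Fin d → ℝ))
    (hT₁m : Measurable T₁)
    (hT₁ : μ.map T₁ = ν)
    (hqp₁ : ∀ᵐ x ∂μ, Qν (T₁ x) = Qμ x) (hqp₂ : ∀ᵐ x ∂μ, Qν (T₂ x) = Qμ x) :
    T₁ =ᵐ[μ] T₂ := by
  have hp₀fibers : ∀ᵐ z ∂p₀, (Qν ⁻¹' {z}).Subsingleton :=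
    hp₀.ae_le (hQνcm.ae_subsingleton_preimage volume)
  have hνfibers : ∀ᵐ y ∂ν, (Qν ⁻¹' {Qν y}).Subsingleton :=
    ae_of_ae_map hQνm.aemeasurable (hQν ▸ hp₀fibers)
  have hμfibers : ∀ᵐ x ∂μ, (Qν ⁻¹' {Qν (T₁ x)}).Subsingleton :=
    ae_of_ae_map hT₁m.aemeasurable (hT₁ ▸ hνfibers)
  filter_upwards [hμfibers, hqp₁, hqp₂] with x hx h₁ h₂
  exact hx rfl (h₂.trans h₁.symm)

/-- Uniqueness (`μ`-a.e.) of `p₀`-quantile-preserving transport maps: if `Q_μ`, `Q_ν` are the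
cyclically monotone transports to the reference measure `p₀`, and `T₁`, `T₂` are transport maps
from `μ` to `ν` with `Q_ν ∘ T₁ = Q_μ` and `Q_ν ∘ T₂ = Q_μ` `μ`-a.e., then `T₁ = T₂` `μ`-a.e. -/
theorem quantilePreserving_unique {d : ℕ}
    (μ ν p₀ : Measure (Fin d → ℝ))
    [IsProbabilityMeasure μ] [IsProbabilityMeasure ν] [IsProbabilityMeasure p₀]
    (hμ : μ ≪ volume) (hν : ν ≪ volume) (hp₀ : p₀ ≪ volume)
    (Qμ Qν : (Fin d → ℝ) → (Fin d → ℝ))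
    (hQμm : Measurable Qμ) (hQνm : Measurable Qν)
    (hQμcm : CyclicallyMonotone Qμ) (hQνcm : CyclicallyMonotone Qν)
    (hQμ : μ.map Qμ = p₀) (hQν : ν.map Qν = p₀)
    (T₁ T₂ : (Fin d → ℝ) → (Fin d → ℝ))
    (hT₁m : Measurable T₁) (hT₂m : Measurable T₂)
    (hT₁ : μ.map T₁ = ν) (hT₂ : μ.map T₂ = ν)
    (hqp₁ : ∀ᵐ x ∂μ, Qν (T₁ x) = Qμ x) (hqp₂ : ∀ᵐ x ∂μ, Qν (T₂ x) = Qμ x) :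
    T₁ =ᵐ[μ] T₂ :=
  quantilePreserving_unique_general μ ν p₀ hp₀ Qμ Qν hQνm hQνcm hQν T₁ T₂ hT₁m hT₁ hqp₁ hqp₂
end

section
/- Let μ and ν be Borel probability measures on ℝ^d, both absolutely continuous with respect to the Lebesgue measure. If T₁ and T₂ are Borel triangular monotone transport maps from μ to ν, then T₁ = T₂ μ-almost everywhere. -/
/-!
Induct on the dimension, writing `x = (a, y)` with `a = x 0`. The first components `f₁, f₂` of
`T₁, T₂` are monotone maps of `a` with the same push-forward of the first marginal of `μ`, so
their sublevel sets are nested and of equal measure, and `f₁ = f₂` a.e. Since `ν` has a density,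
its first marginal has no atoms, so each `fᵢ` has a measurable a.e. left inverse; by uniqueness
of disintegrations, the conditional law of `ν` at `fᵢ a` is then the push-forward of the
conditional law of `μ` at `a` under the remaining components `Tᵢ(a, ·)`, which are again
triangular monotone. For a.e. `a` these conditional laws of `ν` have densities, so the induction
hypothesis applies on each fibre.
-/

open MeasureTheory

/-- A map `T : ℝ^d → ℝ^d` is triangular monotone if its `k`-th component only depends on the
first `k` coordinates and is non-decreasing in the `k`-th coordinate when the previous ones
are fixed. -/
def TriangularMonotone {d : ℕ} (T : (Fin d → ℝ) → (Fin d → ℝ)) : Prop :=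
  (∀ k : Fin d, ∀ x y : Fin d → ℝ, (∀ j : Fin d, j ≤ k → x j = y j) → T x k = T y k) ∧
  (∀ k : Fin d, ∀ x y : Fin d → ℝ, (∀ j : Fin d, j < k → x j = y j) → x k ≤ y k →
    T x k ≤ T y k)

open Set ProbabilityTheory

theorem Monotone.ae_eq_of_map_eq {α : Type*} [LinearOrder α] [MeasurableSpace α]
    {μ : Measure α} [IsFiniteMeasure μ] {f g : α → ℝ} (hf : Monotone f) (hg : Monotone g)
    (hfm : Measurable f) (hgm : Measurable g) (h : μ.map f = μ.map g) : f =ᵐ[μ] g := by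
  have hsublevel (q : ℚ) : f ⁻¹' Iic (q : ℝ) =ᵐ[μ] g ⁻¹' Iic (q : ℝ) := by
    have hμ : μ (f ⁻¹' Iic (q : ℝ)) = μ (g ⁻¹' Iic (q : ℝ)) := by
      rw [← Measure.map_apply hfm measurableSet_Iic, h, Measure.map_apply hgm measurableSet_Iic]
    have hfl : IsLowerSet (f ⁻¹' Iic (q : ℝ)) := fun _ _ hyx hx => (hf hyx).trans hx
    have hgl : IsLowerSet (g ⁻¹' Iic (q : ℝ)) := fun _ _ hyx hx => (hg hyx).trans hx
    rcases hfl.total hgl with hfg | hgf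
    · exact ae_eq_of_subset_of_measure_ge hfg hμ.ge
        (hfm measurableSet_Iic).nullMeasurableSet (measure_ne_top _ _)
    · exact (ae_eq_of_subset_of_measure_ge hgf hμ.le
        (hgm measurableSet_Iic).nullMeasurableSet (measure_ne_top _ _)).symm
  filter_upwards [ae_all_iff.2 hsublevel] with x hx
  have hiff (q : ℚ) : f x ≤ q ↔ g x ≤ q := (hx q).to_iff
  exact le_antisymm (le_of_forall_lt_rat_imp_le fun q hq => (hiff q).2 hq.le)
    (le_of_forall_lt_rat_imp_le fun q hq => (hiff q).1 hq.le)

theorem Monotone.exists_measurable_ae_leftInverse {μ : Measure ℝ} {f : ℝ → ℝ} (hf : Monotone f)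
    (hlevel : ∀ c, μ (f ⁻¹' {c}) = 0) : ∃ g : ℝ → ℝ, Measurable g ∧ ∀ᵐ a ∂μ, g (f a) = a := by
  -- The generalized inverse, taken in `EReal` so that it is monotone on all of `ℝ`.
  let g : ℝ → EReal := fun b => sInf ((↑) '' {a : ℝ | b ≤ f a})
  have hg : Monotone g := fun b b' hbb' => sInf_le_sInf (image_mono fun a ha => hbb'.trans ha)
  refine ⟨fun b => (g b).toReal, hg.measurable.ereal_toReal, ?_⟩
  have hnull : μ (⋃ q : ℚ, f ⁻¹' {f q}) = 0 := measure_iUnion_null fun q => hlevel _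
  filter_upwards [measure_eq_zero_iff_ae_notMem.1 hnull] with a ha
  have hIci : {a' | f a ≤ f a'} = Ici a := by
    refine Subset.antisymm (fun a' ha' => mem_Ici.2 <| not_lt.1 fun hlt => ?_) fun _ h => hf h
    obtain ⟨q, hq₁, hq₂⟩ := exists_rat_btwn hlt
    exact ha (mem_iUnion.2 ⟨q, le_antisymm (ha'.trans (hf hq₁.le)) (hf hq₂.le)⟩)
  simp [g, hIci]

namespace MeasureTheory.Measure

variable {α β Ω Ω' : Type*} [MeasurableSpace α] [MeasurableSpace β] [MeasurableSpace Ω]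
  [MeasurableSpace Ω']

theorem ae_condKernel_absolutelyContinuous [StandardBorelSpace Ω] [Nonempty Ω]
    {ρ : Measure (α × Ω)} [IsFiniteMeasure ρ] {μ : Measure α} {ν : Measure Ω}
    [SFinite μ] [SFinite ν] (h : ρ ≪ μ.prod ν) : ∀ᵐ a ∂ρ.fst, ρ.condKernel a ≪ ν := by
  have hfinite : ρ.fst ⊗ₘ ρ.condKernel ≪ μ.toFinite ⊗ₘ Kernel.const α ν.toFinite := by
    rw [ρ.disintegrate, compProd_const]
    exact h.trans ((absolutelyContinuous_toFinite μ).prod (absolutelyContinuous_toFinite ν))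
  filter_upwards [hfinite.kernel_of_compProd] with a ha
  exact ha.trans (toFinite_absolutelyContinuous ν)

theorem fst_map_prodMk_fst (ρ : Measure (α × Ω)) {f : α → β} {G : α × Ω → Ω'}
    (hf : Measurable f) (hG : Measurable G) :
    (ρ.map fun p => (f p.1, G p)).fst = ρ.fst.map f := by
  rw [fst_map_prodMk hG, Measure.fst, map_map hf measurable_fst]
  rfl

theorem ae_condKernel_map_prodMk_eq [StandardBorelSpace Ω] [Nonempty Ω] [StandardBorelSpace Ω']
    [Nonempty Ω'] {ρ : Measure (α × Ω)} [IsFiniteMeasure ρ] {f : α → β} {g : β → α}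
    {G : α × Ω → Ω'} (hf : Measurable f) (hg : Measurable g) (hG : Measurable G)
    (hgf : ∀ᵐ a ∂ρ.fst, g (f a) = a) :
    ∀ᵐ a ∂ρ.fst, (ρ.map fun p => (f p.1, G p)).condKernel (f a) =
      (ρ.condKernel a).map fun y => G (a, y) := by
  set Φ : α × Ω → β × Ω' := fun p => (f p.1, G p)
  have hΦ : Measurable Φ := by fun_prop
  let κ : Kernel α Ω' := (Kernel.id ×ₖ ρ.condKernel).map G
  have hκ_apply (a : α) {s : Set Ω'} (hs : MeasurableSet s) :
      κ a s = ρ.condKernel a (Prod.mk a ⁻¹' (G ⁻¹' s)) := by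
    rw [Kernel.map_apply' _ hG _ hs, Kernel.id_prod_apply' _ _ (hG hs)]
  have hκ (a : α) : κ a = (ρ.condKernel a).map fun y => G (a, y) := by
    ext s hs
    rw [hκ_apply a hs, map_apply (by fun_prop) hs]
    rfl
  have hfst : (ρ.map Φ).fst = ρ.fst.map f := ρ.fst_map_prodMk_fst hf hG
  have hdisint : ρ.map Φ = (ρ.map Φ).fst ⊗ₘ κ.comap g hg := by
    ext s hs
    rw [compProd_apply hs, hfst, lintegral_map (Kernel.measurable_kernel_prodMk_left hs) hf]
    calc ρ.map Φ s = (ρ.fst ⊗ₘ ρ.condKernel) (Φ ⁻¹' s) := by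
          rw [map_apply hΦ hs, ρ.disintegrate]
      _ = ∫⁻ a, ρ.condKernel a (Prod.mk a ⁻¹' (Φ ⁻¹' s)) ∂ρ.fst := compProd_apply (hΦ hs)
      _ = ∫⁻ a, κ.comap g hg (f a) (Prod.mk (f a) ⁻¹' s) ∂ρ.fst := by
          refine lintegral_congr_ae ?_
          filter_upwards [hgf] with a ha
          rw [Kernel.comap_apply, ha, hκ_apply a (measurable_prodMk_left hs)]
          rfl
  have huniq := eq_condKernel_of_measure_eq_compProd _ hdisint
  rw [hfst] at huniq
  filter_upwards [hgf, ae_of_ae_map hf.aemeasurable huniq] with a hga ha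
  rw [← ha, Kernel.comap_apply, hga, hκ]

end MeasureTheory.Measure

theorem ae_eq_of_map_eq_of_ae_eq_fibres {E E' : Type*} [MeasurableSpace E] [StandardBorelSpace E]
    [Nonempty E] [MeasurableSpace E'] [StandardBorelSpace E'] [Nonempty E']
    {ρ : Measure (ℝ × E)} [IsFiniteMeasure ρ] {ν : Measure E'} [SFinite ν]
    {f₁ f₂ : ℝ → ℝ} {G₁ G₂ : ℝ × E → E'} (hf₁ : Monotone f₁) (hf₂ : Monotone f₂)
    (hf₁m : Measurable f₁) (hf₂m : Measurable f₂) (hG₁m : Measurable G₁) (hG₂m : Measurable G₂)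
    (hmap : ρ.map (fun p => (f₁ p.1, G₁ p)) = ρ.map (fun p => (f₂ p.1, G₂ p)))
    (hac : ρ.map (fun p => (f₁ p.1, G₁ p)) ≪ volume.prod ν)
    (hfibre : ∀ a (m : Measure E), IsProbabilityMeasure m →
      m.map (fun y => G₁ (a, y)) = m.map (fun y => G₂ (a, y)) →
      m.map (fun y => G₁ (a, y)) ≪ ν → (fun y => G₁ (a, y)) =ᵐ[m] fun y => G₂ (a, y)) :
    (fun p => (f₁ p.1, G₁ p)) =ᵐ[ρ] fun p => (f₂ p.1, G₂ p) := by
  set σ := ρ.map fun p => (f₁ p.1, G₁ p)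
  have hfst₁ : σ.fst = ρ.fst.map f₁ := ρ.fst_map_prodMk_fst hf₁m hG₁m
  have hfst₂ : σ.fst = ρ.fst.map f₂ := hmap ▸ ρ.fst_map_prodMk_fst hf₂m hG₂m
  have hf : f₁ =ᵐ[ρ.fst] f₂ := hf₁.ae_eq_of_map_eq hf₂ hf₁m hf₂m (hfst₁.symm.trans hfst₂)
  have hatoms (c : ℝ) : σ.fst {c} = 0 := by
    rw [Measure.fst_apply (measurableSet_singleton c)]
    exact hac (by rw [← prod_univ, Measure.prod_prod, Real.volume_singleton, zero_mul])
  have hlevel {f : ℝ → ℝ} (hfm : Measurable f) (hfst : σ.fst = ρ.fst.map f) (c : ℝ) :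
      ρ.fst (f ⁻¹' {c}) = 0 := by
    rw [← Measure.map_apply hfm (measurableSet_singleton c), ← hfst, hatoms]
  obtain ⟨g₁, hg₁m, hg₁⟩ := hf₁.exists_measurable_ae_leftInverse (hlevel hf₁m hfst₁)
  obtain ⟨g₂, hg₂m, hg₂⟩ := hf₂.exists_measurable_ae_leftInverse (hlevel hf₂m hfst₂)
  have hcond₁ := ρ.ae_condKernel_map_prodMk_eq hf₁m hg₁m hG₁m hg₁
  have hcond₂ := ρ.ae_condKernel_map_prodMk_eq hf₂m hg₂m hG₂m hg₂
  have hσ : (ρ.map fun p => (f₂ p.1, G₂ p)).condKernel = σ.condKernel := by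
    congr 1
    exact hmap.symm
  rw [hσ] at hcond₂
  have hσac : ∀ᵐ a ∂ρ.fst, σ.condKernel (f₁ a) ≪ ν :=
    ae_of_ae_map hf₁m.aemeasurable (hfst₁ ▸ σ.ae_condKernel_absolutelyContinuous hac)
  have hfibres : ∀ᵐ a ∂ρ.fst, ∀ᵐ y ∂ρ.condKernel a, (f₁ a, G₁ (a, y)) = (f₂ a, G₂ (a, y)) := by
    filter_upwards [hf, hcond₁, hcond₂, hσac] with a hfa h₁ h₂ hσa
    filter_upwards [hfibre a _ inferInstance (by rw [← h₁, ← h₂, hfa]) (h₁ ▸ hσa)] with y hy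
    rw [hfa, hy]
  rw [← ρ.disintegrate ρ.condKernel]
  exact Measure.ae_compProd_of_ae_ae (measurableSet_eq_fun (by fun_prop) (by fun_prop)) hfibres

section TriangularDecomposition

variable {d : ℕ} {T : (Fin (d + 1) → ℝ) → (Fin (d + 1) → ℝ)}

def triangularHead (T : (Fin (d + 1) → ℝ) → (Fin (d + 1) → ℝ)) (a : ℝ) : ℝ :=
  T (Fin.cons a 0) 0

def triangularTail (T : (Fin (d + 1) → ℝ) → (Fin (d + 1) → ℝ)) (a : ℝ) (y : Fin d → ℝ) :
    Fin d → ℝ :=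
  Fin.tail (T (Fin.cons a y))

theorem Measurable.triangularHead (hT : Measurable T) : Measurable (triangularHead T) := by
  unfold _root_.triangularHead
  fun_prop

theorem Measurable.triangularTail (hT : Measurable T) :
    Measurable fun p : ℝ × (Fin d → ℝ) => triangularTail T p.1 p.2 := by
  unfold _root_.triangularTail Fin.tail
  fun_prop

namespace TriangularMonotone

theorem monotone_triangularHead (hT : TriangularMonotone T) : Monotone (triangularHead T) :=
  fun _ _ hab => hT.2 0 _ _ (fun j hj => absurd hj (Fin.not_lt_zero j)) hab

theorem piFinSuccAbove_apply (hT : TriangularMonotone T) (x : Fin (d + 1) → ℝ) :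
    MeasurableEquiv.piFinSuccAbove (fun _ => ℝ) 0 (T x) =
      (triangularHead T (x 0), triangularTail T (x 0) (Fin.tail x)) := by
  have hhead : triangularHead T (x 0) = T x 0 :=
    hT.1 0 _ _ fun j hj => by rw [Fin.le_zero_iff.1 hj]; rfl
  simp [hhead, _root_.triangularTail, Fin.cons_self_tail]

theorem tail (hT : TriangularMonotone T) (a : ℝ) : TriangularMonotone (triangularTail T a) := by
  refine ⟨fun k y y' h => hT.1 k.succ _ _ (Fin.cases (fun _ => rfl) fun i hi => ?_),
    fun k y y' h hk => hT.2 k.succ _ _ (Fin.cases (fun _ => rfl) fun i hi => ?_) hk⟩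
  · exact h i (Fin.succ_le_succ_iff.1 hi)
  · exact h i (Fin.succ_lt_succ_iff.1 hi)

end TriangularMonotone

end TriangularDecomposition

theorem TriangularMonotone.ae_eq_of_map_eq {d : ℕ} {μ : Measure (Fin d → ℝ)} [IsFiniteMeasure μ]
    {T₁ T₂ : (Fin d → ℝ) → (Fin d → ℝ)} (hT₁ : TriangularMonotone T₁)
    (hT₂ : TriangularMonotone T₂) (hT₁m : Measurable T₁) (hT₂m : Measurable T₂)
    (hmap : μ.map T₁ = μ.map T₂) (hac : μ.map T₁ ≪ volume) : T₁ =ᵐ[μ] T₂ := by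
  induction d with
  | zero => exact .of_forall fun _ => Subsingleton.elim _ _
  | succ d ih =>
    set e := MeasurableEquiv.piFinSuccAbove (fun _ : Fin (d + 1) => ℝ) 0
    have hsplit {T} (hT : TriangularMonotone T) (hTm : Measurable T) :
        (μ.map e).map (fun p => (triangularHead T p.1, triangularTail T p.1 p.2)) =
          (μ.map T).map e := by
      have hsplitm : Measurable fun p : ℝ × (Fin d → ℝ) =>
          (triangularHead T p.1, triangularTail T p.1 p.2) :=
        (hTm.triangularHead.comp measurable_fst).prodMk hTm.triangularTail
      rw [Measure.map_map hsplitm e.measurable, Measure.map_map e.measurable hTm]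
      exact congrArg (Measure.map · μ) (funext fun x => (hT.piFinSuccAbove_apply x).symm)
    have hsplit_ae := ae_eq_of_map_eq_of_ae_eq_fibres (ρ := μ.map e) (ν := volume)
      hT₁.monotone_triangularHead hT₂.monotone_triangularHead hT₁m.triangularHead
      hT₂m.triangularHead hT₁m.triangularTail hT₂m.triangularTail
      (by rw [hsplit hT₁ hT₁m, hsplit hT₂ hT₂m, hmap])
      (by
        rw [hsplit hT₁ hT₁m, ← Measure.volume_eq_prod,
          ← (volume_preserving_piFinSuccAbove (fun _ => ℝ) 0).map_eq]
        exact hac.map e.measurable)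
      fun a m _ h₁ h₂ => ih (hT₁.tail a) (hT₂.tail a)
        (hT₁m.triangularTail.comp measurable_prodMk_left)
        (hT₂m.triangularTail.comp measurable_prodMk_left) h₁ h₂
    filter_upwards [ae_of_ae_map e.measurable.aemeasurable hsplit_ae] with x hx
    exact e.injective (by rw [hT₁.piFinSuccAbove_apply, hT₂.piFinSuccAbove_apply]; exact hx)

theorem knothe_rosenblatt_unique_general {d : ℕ}
    (μ ν : Measure (Fin d → ℝ)) [IsProbabilityMeasure μ]
    (hν : ν ≪ volume)
    (T₁ T₂ : (Fin d → ℝ) → (Fin d → ℝ))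
    (hT₁m : Measurable T₁) (hT₂m : Measurable T₂)
    (hT₁ : TriangularMonotone T₁) (hT₂ : TriangularMonotone T₂)
    (hp₁ : μ.map T₁ = ν) (hp₂ : μ.map T₂ = ν) :
    T₁ =ᵐ[μ] T₂ :=
  hT₁.ae_eq_of_map_eq hT₂ hT₁m hT₂m (hp₁.trans hp₂.symm) (hp₁ ▸ hν)

/-- Uniqueness part of the Knothe–Rosenblatt theorem: two Borel triangular monotone transport
maps between absolutely continuous probability measures coincide `μ`-a.e. -/
theorem knothe_rosenblatt_unique {d : ℕ}
    (μ ν : Measure (Fin d → ℝ)) [IsProbabilityMeasure μ] [IsProbabilityMeasure ν]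
    (hμ : μ ≪ volume) (hν : ν ≪ volume)
    (T₁ T₂ : (Fin d → ℝ) → (Fin d → ℝ))
    (hT₁m : Measurable T₁) (hT₂m : Measurable T₂)
    (hT₁ : TriangularMonotone T₁) (hT₂ : TriangularMonotone T₂)
    (hp₁ : μ.map T₁ = ν) (hp₂ : μ.map T₂ = ν) :
    T₁ =ᵐ[μ] T₂ :=
  knothe_rosenblatt_unique_general μ ν hν T₁ T₂ hT₁m hT₂m hT₁ hT₂ hp₁ hp₂
end

section
/- There is no differentiable function φ : ℝ² → ℝ whose gradient satisfies ∇φ(x, y) = (6x + e^{3x + y²}, 2y·e^{3x + y²}) for all (x, y) ∈ ℝ². Consequently, the composition of the cyclically monotone maps (x, y) ↦ (3x, y) and (x, y) ↦ (2x + e^{x + y²}, 2y·e^{x + y²}) is not the gradient of any differentiable function. -/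
/-!
The field `G = (6x + e^{3x+y²}, 2y·e^{3x+y²})` is not curl-free: `∂_y G₁ = 2y·e^{3x+y²}` while
`∂_x G₂ = 6y·e^{3x+y²}`. Concretely, a potential `f` would have to satisfy, along the edges of the
unit square, `f(x,1) - f(x,0) = e^{3x+1} - e^{3x}` and `f(1,y) - f(0,y) = 3 + (e^{3+y²} - e^{y²})/3`;
going around the square in both orders forces `(e³ - 1)(e - 1) = 0`.
-/

open Real InnerProductSpace

theorem sub_eq_sub_of_hasDerivAt {𝕜 G : Type*} [RCLike 𝕜] [NormedAddCommGroup G]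
    [NormedSpace 𝕜 G] {f g f' : 𝕜 → G} (hf : ∀ t, HasDerivAt f (f' t) t)
    (hg : ∀ t, HasDerivAt g (f' t) t) (a b : 𝕜) : f b - f a = g b - g a := by
  have hfg (t : 𝕜) : HasDerivAt (f - g) 0 t := by simpa using (hf t).sub (hg t)
  have := is_const_of_deriv_eq_zero (fun t => (hfg t).differentiableAt)
    (fun t => (hfg t).deriv) b a
  rw [Pi.sub_apply, Pi.sub_apply, sub_eq_sub_iff_sub_eq_sub] at this
  exact this

theorem hasDerivAt_apply_add_smul {F : Type*} [NormedAddCommGroup F] [InnerProductSpace ℝ F]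
    [CompleteSpace F] {φ : F → ℝ} {p v : F} {t : ℝ} (hφ : DifferentiableAt ℝ φ (p + t • v)) :
    HasDerivAt (fun s : ℝ => φ (p + s • v)) ⟪gradient φ (p + t • v), v⟫_ℝ t := by
  have h := hφ.hasFDerivAt.comp_hasDerivAt t (((hasDerivAt_id t).smul_const v).const_add p)
  rw [one_smul, ← inner_gradient_left] at h
  exact h

section EuclideanPlane

variable {φ : EuclideanSpace ℝ (Fin 2) → ℝ}

theorem hasDerivAt_apply_fst {x y : ℝ} (hφ : DifferentiableAt ℝ φ !₂[x, y]) :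
    HasDerivAt (fun x => φ !₂[x, y]) (gradient φ !₂[x, y] 0) x := by
  have hline (s : ℝ) : !₂[0, y] + s • EuclideanSpace.single 0 1 = !₂[s, y] := by
    ext i; fin_cases i <;> simp
  have h := hasDerivAt_apply_add_smul (p := !₂[0, y]) (v := EuclideanSpace.single 0 1)
    (hline x ▸ hφ)
  simp only [hline, EuclideanSpace.inner_single_right, conj_trivial, one_mul] at h
  exact h

theorem hasDerivAt_apply_snd {x y : ℝ} (hφ : DifferentiableAt ℝ φ !₂[x, y]) :
    HasDerivAt (fun y => φ !₂[x, y]) (gradient φ !₂[x, y] 1) y := by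
  have hline (s : ℝ) : !₂[x, 0] + s • EuclideanSpace.single 1 1 = !₂[x, s] := by
    ext i; fin_cases i <;> simp
  have h := hasDerivAt_apply_add_smul (p := !₂[x, 0]) (v := EuclideanSpace.single 1 1)
    (hline y ▸ hφ)
  simp only [hline, EuclideanSpace.inner_single_right, conj_trivial, one_mul] at h
  exact h

end EuclideanPlane

theorem false_of_hasDerivAt_partials (f : ℝ → ℝ → ℝ)
    (hx : ∀ x y, HasDerivAt (fun x => f x y) (6 * x + exp (3 * x + y ^ 2)) x)
    (hy : ∀ x y, HasDerivAt (f x) (2 * y * exp (3 * x + y ^ 2)) y) : False := by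
  have hx' (x y : ℝ) : HasDerivAt (fun x => 3 * x ^ 2 + exp (3 * x + y ^ 2) / 3)
      (6 * x + exp (3 * x + y ^ 2)) x :=
    (((hasDerivAt_pow 2 x).const_mul 3).fun_add
      ((((hasDerivAt_id' x).const_mul 3).add_const (y ^ 2)).exp.div_const 3)).congr_deriv
      (by norm_num; ring)
  have hy' (x y : ℝ) : HasDerivAt (fun y => exp (3 * x + y ^ 2))
      (2 * y * exp (3 * x + y ^ 2)) y :=
    ((hasDerivAt_pow 2 y).const_add (3 * x)).exp.congr_deriv (by norm_num; ring)
  have hvert (x : ℝ) : f x 1 - f x 0 = exp (3 * x + 1) - exp (3 * x) := by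
    simpa using sub_eq_sub_of_hasDerivAt (hy x) (hy' x) 0 1
  have hhor (y : ℝ) : f 1 y - f 0 y = 3 + (exp (3 + y ^ 2) - exp (y ^ 2)) / 3 := by
    have := sub_eq_sub_of_hasDerivAt (hx · y) (hx' · y) 0 1
    norm_num at this
    linarith
  have h00 := hvert 0
  have h10 := hvert 1
  have h01 := hhor 0
  have h11 := hhor 1
  norm_num at h00 h10 h01 h11
  have hexp : exp 4 = exp 3 * exp 1 := by rw [← exp_add]; norm_num
  have hzero : (exp 3 - 1) * (exp 1 - 1) = 0 := by
    linear_combination (3 / 2) * (h11 - h01 - h10 + h00) - hexp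
  have h3 : exp 3 - 1 ≠ 0 := (sub_pos.2 (one_lt_exp_iff.2 (by norm_num))).ne'
  have h1 : exp 1 - 1 ≠ 0 := (sub_pos.2 (one_lt_exp_iff.2 one_pos)).ne'
  exact mul_ne_zero h3 h1 hzero

theorem false_of_gradient_eq {φ : EuclideanSpace ℝ (Fin 2) → ℝ} (hφ : Differentiable ℝ φ)
    (h : ∀ p : EuclideanSpace ℝ (Fin 2),
      gradient φ p 0 = 6 * p 0 + exp (3 * p 0 + (p 1) ^ 2) ∧
      gradient φ p 1 = 2 * p 1 * exp (3 * p 0 + (p 1) ^ 2)) : False :=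
  false_of_hasDerivAt_partials (fun x y => φ !₂[x, y])
    (fun x y => by simpa [(h _).1] using hasDerivAt_apply_fst (hφ _))
    (fun x y => by simpa [(h _).2] using hasDerivAt_apply_snd (hφ _))

/-- There is no differentiable `φ : ℝ² → ℝ` with gradient
`∇φ(x, y) = (6x + e^{3x + y²}, 2y·e^{3x + y²})`; consequently the composition of the cyclically
monotone maps `(x, y) ↦ (3x, y)` and `(x, y) ↦ (2x + e^{x + y²}, 2y·e^{x + y²})` is not the
gradient of any differentiable function. -/
theorem composition_not_gradient :
    (¬ ∃ φ : EuclideanSpace ℝ (Fin 2) → ℝ, Differentiable ℝ φ ∧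
      ∀ p : EuclideanSpace ℝ (Fin 2),
        gradient φ p 0 = 6 * p 0 + Real.exp (3 * p 0 + (p 1) ^ 2) ∧
        gradient φ p 1 = 2 * p 1 * Real.exp (3 * p 0 + (p 1) ^ 2)) ∧
    (¬ ∃ φ : EuclideanSpace ℝ (Fin 2) → ℝ, Differentiable ℝ φ ∧
      gradient φ =
        (fun p : EuclideanSpace ℝ (Fin 2) =>
            (!₂[2 * p 0 + Real.exp (p 0 + (p 1) ^ 2),
               2 * p 1 * Real.exp (p 0 + (p 1) ^ 2)] : EuclideanSpace ℝ (Fin 2))) ∘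
          (fun p : EuclideanSpace ℝ (Fin 2) =>
            (!₂[3 * p 0, p 1] : EuclideanSpace ℝ (Fin 2)))) := by
  refine ⟨fun ⟨φ, hφ, h⟩ => false_of_gradient_eq hφ h, fun ⟨φ, hφ, h⟩ => ?_⟩
  refine false_of_gradient_eq hφ fun p => ?_
  simp only [h, Function.comp_apply, Matrix.cons_val_zero, Matrix.cons_val_one,
    Matrix.cons_val_fin_one]
  exact ⟨by ring, trivial⟩
end

section
/- Let M be a d × d real matrix such that I − M is invertible. Suppose there exist a symmetric positive definite d × d matrix H and a diagonal d × d matrix D with strictly positive diagonal entries such that (I − M)⁻¹ = H·D. Then for all indices i, j: M_{i,j} = 0 if and only if M_{j,i} = 0. -/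
open Matrix

/-- If `I − M` is invertible and `(I − M)⁻¹ = H · D` with `H` symmetric positive definite and
`D` diagonal with strictly positive diagonal entries, then the zero pattern of `M` is
symmetric: `M i j = 0 ↔ M j i = 0`. -/
theorem symmetric_zero_pattern_of_posdef_diagonal_factorization {d : ℕ}
    (M : Matrix (Fin d) (Fin d) ℝ) (hM : IsUnit (1 - M))
    (H : Matrix (Fin d) (Fin d) ℝ) (hH : H.PosDef)
    (v : Fin d → ℝ) (hv : ∀ i, 0 < v i)
    (hfact : (1 - M)⁻¹ = H * Matrix.diagonal v) :
    ∀ i j, M i j = 0 ↔ M j i = 0 := by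
  have hMd : IsUnit (1 - M).det := (Matrix.isUnit_iff_isUnit_det _).mp hM
  have hHd : IsUnit H.det := isUnit_iff_ne_zero.mpr hH.det_pos.ne'
  have hDd : IsUnit (Matrix.diagonal v).det := by
    rw [Matrix.det_diagonal]
    exact isUnit_iff_ne_zero.mpr (Finset.prod_pos fun i _ => hv i).ne'
  have hDinv : (Matrix.diagonal v)⁻¹ = Matrix.diagonal (fun i => (v i)⁻¹) := by
    apply Matrix.inv_eq_right_inv
    rw [Matrix.diagonal_mul_diagonal]
    have h1 : (fun i => v i * (v i)⁻¹) = fun _ => (1 : ℝ) :=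
      funext fun i => mul_inv_cancel₀ (hv i).ne'
    rw [h1]
    exact Matrix.diagonal_one
  have key : 1 - M = Matrix.diagonal (fun i => (v i)⁻¹) * H⁻¹ := by
    have := congrArg (fun A => A⁻¹) hfact
    rw [Matrix.nonsing_inv_nonsing_inv _ hMd, Matrix.mul_inv_rev, hDinv] at this
    exact this
  have hinv : (H⁻¹).PosDef := hH.inv
  have hsymm : ∀ i j, H⁻¹ i j = H⁻¹ j i := fun i j => by
    have := hinv.isHermitian.apply j i
    simpa using this
  intro i j
  rcases eq_or_ne i j with rfl | hij
  · rfl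
  have hij' : j ≠ i := hij.symm
  have hi : M i j = - ((v i)⁻¹ * H⁻¹ i j) := by
    have := congrFun (congrFun key i) j
    simp [Matrix.sub_apply, Matrix.one_apply_ne hij, Matrix.diagonal_mul] at this
    linarith
  have hj : M j i = - ((v j)⁻¹ * H⁻¹ j i) := by
    have := congrFun (congrFun key j) i
    simp [Matrix.sub_apply, Matrix.one_apply_ne hij', Matrix.diagonal_mul] at this
    linarith
  have hvi : (v i)⁻¹ ≠ 0 := inv_ne_zero (hv i).ne'
  have hvj : (v j)⁻¹ ≠ 0 := inv_ne_zero (hv j).ne'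
  rw [hi, hj, hsymm i j]
  constructor <;> intro h <;>
    (simp only [neg_eq_zero, mul_eq_zero] at h ⊢; tauto)
end
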